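/- arXiv:math/0303236 — 3 statements merged into one kernel-verified Lean document; each statement's English description precedes it below -/
import Mathlib

section
/- Let A be a measure-preserving automorphism of a probability space (S, μ) and f a non-negative measurable function on S. Then for almost all x ∈ S, liminf_{m→∞} (1/m) f(Aᵐ x) = 0. -/
open MeasureTheory Filter

/-- Poincaré recurrence estimate: if `A` is a measure-preserving automorphism of a
probability space `(S, μ)` and `f ≥ 0` is measurable, then for almost every `x`,
`liminf_{m → ∞} f(Aᵐ x)/m = 0`. -/
theorem stmt_3 {S : Type*} [MeasurableSpace S] (μ : Measure S)
    [IsProbabilityMeasure μ]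
    (A : S → S) (hA : MeasurePreserving A μ μ) (hbij : Function.Bijective A)
    (f : S → ℝ) (hf : Measurable f) (hf0 : ∀ x, 0 ≤ f x) :
    ∀ᵐ x ∂μ, Filter.liminf (fun m : ℕ => f (A^[m] x) / m) Filter.atTop = 0 := by
  have hcons : Conservative A μ := hA.conservative
  have H : ∀ M : ℕ, ∀ᵐ x ∂μ, x ∈ f ⁻¹' Set.Iic (M : ℝ) →
      ∃ᶠ m in atTop, A^[m] x ∈ f ⁻¹' Set.Iic (M : ℝ) := fun M =>
    hcons.ae_mem_imp_frequently_image_mem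
      ((hf measurableSet_Iic).nullMeasurableSet)
  filter_upwards [ae_all_iff.2 H] with x hx
  obtain ⟨M, hM⟩ := exists_nat_ge (f x)
  have hfreq : ∃ᶠ m in atTop, f (A^[m] x) ≤ (M : ℝ) := hx M hM
  -- frequently the sequence is ≤ any ε > 0
  have key : ∀ ε : ℝ, 0 < ε → ∃ᶠ m in atTop, f (A^[m] x) / m ≤ ε := by
    intro ε hε
    obtain ⟨N, hN⟩ := exists_nat_ge ((M : ℝ) / ε)
    have hev : ∀ᶠ m : ℕ in atTop, (M : ℝ) / m ≤ ε := by
      filter_upwards [eventually_ge_atTop (N + 1)] with m hm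
      have hm0 : (0 : ℝ) < m := by
        exact_mod_cast lt_of_lt_of_le (Nat.succ_pos N) hm
      rw [div_le_iff₀ hm0]
      calc (M : ℝ) ≤ N * ε := by
            have := (div_le_iff₀ hε).1 hN
            linarith
        _ ≤ ε * m := by
            rw [mul_comm]
            exact mul_le_mul_of_nonneg_left
              (by exact_mod_cast Nat.le_of_succ_le hm) hε.le
    refine (hfreq.and_eventually hev).mono ?_
    rintro m ⟨h1, h2⟩
    rcases Nat.eq_zero_or_pos m with rfl | hm
    · simpa using hε.le
    · have hm0 : (0 : ℝ) < m := by exact_mod_cast hm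
      calc f (A^[m] x) / m ≤ (M : ℝ) / m :=
            div_le_div_of_nonneg_right h1 hm0.le
        _ ≤ ε := h2
  have hbdd : IsBoundedUnder (· ≥ ·) atTop (fun m : ℕ => f (A^[m] x) / m) :=
    ⟨0, eventually_map.2 (Eventually.of_forall fun m => div_nonneg (hf0 _) (Nat.cast_nonneg _))⟩
  have hle : liminf (fun m : ℕ => f (A^[m] x) / m) atTop ≤ 0 := by
    refine le_of_forall_pos_le_add fun ε hε => ?_
    simpa using liminf_le_of_frequently_le (key ε hε) hbdd
  have hge : 0 ≤ liminf (fun m : ℕ => f (A^[m] x) / m) atTop := by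
    refine le_liminf_of_le ?_ (Eventually.of_forall fun m => div_nonneg (hf0 _) (Nat.cast_nonneg _))
    exact IsCoboundedUnder.of_frequently_le (key 1 one_pos)
  linarith
end

section
/- Let k be a local field (e.g. ℝ), V = kⁿ, and J a subgroup of GL(V) acting on the projective space P(V) preserving a Borel probability measure μ. Then either the image of J in PGL(V) has compact closure, or there exists a proper nonzero subspace W < V with μ([W]) > 0, where [W] denotes the image of W \ {0} in P(V). -/
open MeasureTheory

/-- The quotient topology on projective space `P(V)`, as a quotient of `V \ {0}`. -/
noncomputable instance projectivizationTopology {K V : Type*} [DivisionRing K] [AddCommGroup V]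
    [Module K V] [TopologicalSpace V] :
    TopologicalSpace (Projectivization K V) :=
  inferInstanceAs (TopologicalSpace (Quotient (projectivizationSetoid K V)))

/-!
Normalize each `g ∈ J` to norm one. If the condition numbers `‖g‖ ‖g⁻¹‖` are bounded,
the normalized matrices lie in a compact subset of `GL(V)`, and its image in `PGL(V)` contains
that of `J`. Otherwise some normalized sequence `c_m g_m` converges to a nonzero singular `A`.
For `v ∉ ker A` the points `g_m [v]` then converge to `[A v] ∈ [range A]`, so by invariance `μ`
is carried by `[range A]` unless `[ker A]` already has positive measure; both subspaces are
proper and nonzero.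
-/

open Filter Topology Set
open scoped LinearAlgebra.Projectivization

namespace MeasureTheory

variable {X : Type*} [MeasurableSpace X] {μ : Measure X} [IsFiniteMeasure μ] {T : ℕ → X → X}

theorem ae_mem_of_ae_eventually_mem (hT : ∀ m, MeasurePreserving (T m) μ μ) {s : Set X}
    (hs : MeasurableSet s) (h : ∀ᵐ x ∂μ, ∀ᶠ m in atTop, T m x ∈ s) : ∀ᵐ x ∂μ, x ∈ s := by
  set E : ℕ → Set X := fun M => ⋂ m ≥ M, T m ⁻¹' s
  -- the sets `E M` exhaust `X` up to a null set, and `μ (E M) ≤ μ (T M ⁻¹' s) = μ s`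
  have hE : Monotone E := fun M M' hM => biInter_mono (fun m hm => hM.trans hm) fun _ _ => le_rfl
  have hEmeas : MeasurableSet (⋃ M, E M) :=
    .iUnion fun M => .iInter fun m => .iInter fun _ => (hT m).measurable hs
  have hEfull : μ (⋃ M, E M) = μ univ := (ae_mem_iff_measure_eq hEmeas.nullMeasurableSet).1 <|
    h.mono fun x hx => by simpa [E] using eventually_atTop.1 hx
  refine (ae_mem_iff_measure_eq hs.nullMeasurableSet).2
    (le_antisymm (measure_mono (subset_univ _)) ?_)
  calc μ univ = ⨆ M, μ (E M) := hEfull.symm.trans hE.measure_iUnion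
    _ ≤ μ s := iSup_le fun M => calc
        μ (E M) ≤ μ (T M ⁻¹' s) := measure_mono (iInter₂_subset M le_rfl)
        _ = μ s := (hT M).measure_preimage hs.nullMeasurableSet

theorem ae_mem_of_ae_tendsto [TopologicalSpace X] [OpensMeasurableSpace X]
    (hT : ∀ m, MeasurePreserving (T m) μ μ) {G : Set X} (hG : IsGδ G)
    (h : ∀ᵐ x ∂μ, ∃ y ∈ G, Tendsto (fun m => T m x) atTop (𝓝 y)) : ∀ᵐ x ∂μ, x ∈ G := by
  obtain ⟨S, hSopen, hScount, rfl⟩ := hG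
  simp only [mem_sInter]
  refine (ae_ball_iff hScount).2 fun U hU =>
    ae_mem_of_ae_eventually_mem hT (hSopen U hU).measurableSet ?_
  filter_upwards [h] with x ⟨y, hy, hxy⟩
  exact hxy ((hSopen U hU).mem_nhds (hy U hU))

end MeasureTheory

namespace Projectivization

section Topology

variable {K V W : Type*} [DivisionRing K] [AddCommGroup V] [Module K V] [TopologicalSpace V]
  [AddCommGroup W] [Module K W] [TopologicalSpace W]

theorem continuous_map {f : V →ₗ[K] W} (hf : Function.Injective f) (hfc : Continuous f) :
    Continuous (map f hf) :=
  ((hfc.comp continuous_subtype_val).subtype_mk _).quotient_map' _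

theorem tendsto_mk {ι : Type*} {l : Filter ι} {v : ι → V} (hv : ∀ i, v i ≠ 0) {w : V}
    (hw : w ≠ 0) (h : Tendsto v l (𝓝 w)) :
    Tendsto (fun i => mk K (v i) (hv i)) l (𝓝 (mk K w hw)) :=
  (continuous_quotient_mk'.tendsto (⟨w, hw⟩ : {v : V // v ≠ 0})).comp (tendsto_subtype_rng.2 h)

end Topology

section NormRatio

variable {𝕜 V W : Type*} [NormedField 𝕜] [NormedAddCommGroup V] [NormedSpace 𝕜 V]
  [NormedAddCommGroup W] [NormedSpace 𝕜 W]

/-- `ℙ 𝕜 V` carries no metric here; this function is what shows that the sets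
`{x | x.submodule ≤ U}` are `Gδ`. -/
noncomputable def normRatio (L : V →ₗ[𝕜] W) : ℙ 𝕜 V → ℝ :=
  Projectivization.lift (fun v => ‖L v‖ / ‖(v : V)‖) <| by
    rintro ⟨_, hv⟩ ⟨w, hw⟩ t rfl
    have ht : t ≠ 0 := by rintro rfl; simp at hv
    simp only [map_smul, norm_smul]
    exact mul_div_mul_left _ _ (norm_ne_zero_iff.2 ht)

theorem normRatio_mk (L : V →ₗ[𝕜] W) {v : V} (hv : v ≠ 0) :
    normRatio L (mk 𝕜 v hv) = ‖L v‖ / ‖v‖ :=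
  rfl

theorem continuous_normRatio {L : V →ₗ[𝕜] W} (hL : Continuous L) : Continuous (normRatio L) :=
  ((hL.comp continuous_subtype_val).norm.div continuous_subtype_val.norm
    fun v => norm_ne_zero_iff.2 v.2).quotient_lift _

theorem normRatio_eq_zero_iff (L : V →ₗ[𝕜] W) (x : ℙ 𝕜 V) :
    normRatio L x = 0 ↔ x.submodule ≤ LinearMap.ker L := by
  induction x using ind with
  | h v hv => simp [normRatio_mk, submodule_mk, Submodule.span_singleton_le_iff_mem, hv]

end NormRatio

theorem isGδ_setOf_submodule_le {𝕜 V : Type*} [NontriviallyNormedField 𝕜] [CompleteSpace 𝕜]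
    [NormedAddCommGroup V] [NormedSpace 𝕜 V] [FiniteDimensional 𝕜 V] (U : Submodule 𝕜 V) :
    IsGδ {x : ℙ 𝕜 V | x.submodule ≤ U} := by
  obtain ⟨U', hU⟩ := U.exists_isCompl
  set L := Submodule.projectionOnto U' U hU.symm
  have hzero : {x : ℙ 𝕜 V | x.submodule ≤ U} = normRatio L ⁻¹' {0} := by
    ext x
    simp [normRatio_eq_zero_iff, L, Submodule.ker_projectionOnto]
  rw [hzero]
  exact isClosed_singleton.isGδ.preimage (continuous_normRatio L.continuous_of_finiteDimensional)

section Furstenberg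

variable {𝕜 V : Type*} [NontriviallyNormedField 𝕜] [CompleteSpace 𝕜] [NormedAddCommGroup V]
  [NormedSpace 𝕜 V] [FiniteDimensional 𝕜 V] [MeasurableSpace (ℙ 𝕜 V)]
  [OpensMeasurableSpace (ℙ 𝕜 V)] {μ : Measure (ℙ 𝕜 V)} {f : ℕ → V ≃ₗ[𝕜] V} {c : ℕ → 𝕜}
  {F : V →ₗ[𝕜] V}

theorem ae_submodule_le_range_of_tendsto [IsFiniteMeasure μ]
    (hf : ∀ m, MeasurePreserving (map (f m).toLinearMap (f m).injective) μ μ)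
    (hc : ∀ m, c m ≠ 0) (hF : ∀ v, Tendsto (fun m => c m • f m v) atTop (𝓝 (F v)))
    (hker : μ {x | x.submodule ≤ LinearMap.ker F} = 0) :
    ∀ᵐ x ∂μ, x.submodule ≤ LinearMap.range F := by
  refine ae_mem_of_ae_tendsto hf (isGδ_setOf_submodule_le _) ?_
  filter_upwards [measure_eq_zero_iff_ae_notMem.1 hker] with x hx
  induction x using ind with | h v hv => ?_
  have hFv : F v ≠ 0 := fun h0 =>
    hx (by simpa [submodule_mk, Submodule.span_singleton_le_iff_mem] using h0)
  have hne : ∀ m, c m • f m v ≠ 0 := fun m =>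
    smul_ne_zero (hc m) ((f m).map_ne_zero_iff.2 hv)
  refine ⟨mk 𝕜 (F v) hFv, ?_, ?_⟩
  · show (mk 𝕜 (F v) hFv).submodule ≤ LinearMap.range F
    rw [submodule_mk, Submodule.span_singleton_le_iff_mem]
    exact LinearMap.mem_range_self F v
  convert tendsto_mk hne hFv (hF v) using 2 with m
  rw [map_mk, mk_eq_mk_iff']
  exact ⟨(c m)⁻¹, inv_smul_smul₀ (hc m) _⟩

theorem exists_submodule_measure_pos_of_tendsto [IsProbabilityMeasure μ]
    (hf : ∀ m, MeasurePreserving (map (f m).toLinearMap (f m).injective) μ μ)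
    (hc : ∀ m, c m ≠ 0) (hF : ∀ v, Tendsto (fun m => c m • f m v) atTop (𝓝 (F v)))
    (hF0 : F ≠ 0) (hFinj : ¬ Function.Injective F) :
    ∃ W : Submodule 𝕜 V, W ≠ ⊥ ∧ W ≠ ⊤ ∧ 0 < μ {x : ℙ 𝕜 V | x.submodule ≤ W} := by
  by_cases hker : μ {x | x.submodule ≤ LinearMap.ker F} = 0
  · refine ⟨LinearMap.range F, by rwa [Ne, LinearMap.range_eq_bot], ?_, ?_⟩
    · rwa [Ne, LinearMap.range_eq_top, ← LinearMap.injective_iff_surjective]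
    · have hae := ae_submodule_le_range_of_tendsto hf hc hF hker
      rw [ae_iff_measure_eq (isGδ_setOf_submodule_le _).measurableSet.nullMeasurableSet] at hae
      rw [hae, measure_univ]
      exact one_pos
  · refine ⟨LinearMap.ker F, by rwa [Ne, LinearMap.ker_eq_bot],
      by rwa [Ne, LinearMap.ker_eq_top], ?_⟩
    exact pos_iff_ne_zero.2 hker

end Furstenberg

end Projectivization

theorem Units.isCompact_setOf_val_mem_inv_mem {M : Type*} [Monoid M] [TopologicalSpace M]
    [T1Space M] [ContinuousMul M] {K K' : Set M} (hK : IsCompact K) (hK' : IsCompact K') :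
    IsCompact {u : Mˣ | (u : M) ∈ K ∧ (↑u⁻¹ : M) ∈ K'} :=
  isClosedEmbedding_embedProduct.isCompact_preimage
    (hK.prod ((MulOpposite.opHomeomorph.isCompact_preimage (s := MulOpposite.unop ⁻¹' K')).mp hK'))

section NormedAlgebra

variable {R : Type*} [NormedRing R] [NormedAlgebra ℝ R]

theorem Units.mk_smul_eq_mk (c : ℝˣ) (u : Rˣ) :
    (QuotientGroup.mk (c • u) : Rˣ ⧸ Subgroup.center Rˣ) = QuotientGroup.mk u := by
  have hcentral : c • (1 : Rˣ) ∈ Subgroup.center Rˣ :=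
    Subgroup.mem_center_iff.2 fun g => Units.ext (by simp)
  rw [← QuotientGroup.mk_mul_of_mem u hcentral]
  congr 1
  exact Units.ext (by simp)

theorem Units.exists_smul_norm_eq_one [Nontrivial R] (u : Rˣ) :
    ∃ c : ℝˣ, ‖((c • u : Rˣ) : R)‖ = 1 ∧
      ‖(↑(c • u)⁻¹ : R)‖ = ‖(u : R)‖ * ‖(↑u⁻¹ : R)‖ := by
  have hu : ‖(u : R)‖ ≠ 0 := norm_ne_zero_iff.2 u.ne_zero
  refine ⟨Units.mk0 ‖(u : R)‖⁻¹ (inv_ne_zero hu), ?_, ?_⟩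
  · simp [norm_smul, hu]
  · simp [smul_inv, Units.smul_def, norm_smul]

variable [ProperSpace R]

theorem Units.isCompact_closure_image_mk_of_bddAbove {S : Set Rˣ}
    (hS : BddAbove ((fun u : Rˣ => ‖(u : R)‖ * ‖(↑u⁻¹ : R)‖) '' S)) :
    IsCompact (closure (QuotientGroup.mk '' S : Set (Rˣ ⧸ Subgroup.center Rˣ))) := by
  obtain _ | _ := subsingleton_or_nontrivial R
  · exact Set.subsingleton_of_subsingleton.isCompact
  obtain ⟨M, hM⟩ := hS
  refine IsCompact.closure_of_subset ((Units.isCompact_setOf_val_mem_inv_mem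
    (isCompact_closedBall (0 : R) 1) (isCompact_closedBall (0 : R) M)).image
    continuous_quotient_mk') ?_
  rintro _ ⟨u, hu, rfl⟩
  obtain ⟨c, hc₁, hc₂⟩ := u.exists_smul_norm_eq_one
  refine ⟨c • u, ⟨?_, ?_⟩, Units.mk_smul_eq_mk c u⟩
  · exact mem_closedBall_zero_iff.2 hc₁.le
  · exact mem_closedBall_zero_iff.2 (hc₂ ▸ hM ⟨u, hu, rfl⟩)

theorem Units.exists_tendsto_smul_not_isUnit {S : Set Rˣ}
    (hS : ¬ BddAbove ((fun u : Rˣ => ‖(u : R)‖ * ‖(↑u⁻¹ : R)‖) '' S)) :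
    ∃ a : R, a ≠ 0 ∧ ¬ IsUnit a ∧ ∃ (u : ℕ → Rˣ) (c : ℕ → ℝˣ), (∀ m, u m ∈ S) ∧
      Tendsto (fun m => ((c m • u m : Rˣ) : R)) atTop (𝓝 a) := by
  have : Nontrivial R := by
    by_contra h
    rw [not_nontrivial_iff_subsingleton] at h
    exact hS ⟨0, by rintro _ ⟨u, -, rfl⟩; simp [Subsingleton.elim (u : R) 0]⟩
  obtain ⟨u, huS, hu⟩ : ∃ u : ℕ → Rˣ, (∀ m, u m ∈ S) ∧
      ∀ m : ℕ, (m : ℝ) < ‖(u m : R)‖ * ‖(↑(u m)⁻¹ : R)‖ := by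
    simp only [not_bddAbove_iff, Set.exists_mem_image] at hS
    choose u huS hu using fun m : ℕ => hS m
    exact ⟨u, huS, hu⟩
  choose c hc₁ hc₂ using fun m => (u m).exists_smul_norm_eq_one
  obtain ⟨a, ha, φ, hφ, hlim⟩ := (isCompact_sphere (0 : R) 1).tendsto_subseq
    (x := fun m => ((c m • u m : Rˣ) : R)) fun m => mem_sphere_zero_iff_norm.2 (hc₁ m)
  refine ⟨a, ne_zero_of_mem_unit_sphere ⟨a, ha⟩, ?_, u ∘ φ, c ∘ φ, fun m => huS _, hlim⟩
  -- if the limit were a unit, the inverses would converge; their norms are `‖u‖ ‖u⁻¹‖ → ∞`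
  rintro ⟨a, rfl⟩
  have hinv : Tendsto (fun m => ‖(↑(c (φ m) • u (φ m))⁻¹ : R)‖) atTop (𝓝 ‖(↑a⁻¹ : R)‖) := by
    simpa only [Function.comp_def, Ring.inverse_unit] using
      ((NormedRing.inverse_continuousAt a).tendsto.comp hlim).norm
  refine not_tendsto_atTop_of_tendsto_nhds hinv (tendsto_atTop_mono (fun m => ?_)
    tendsto_natCast_atTop_atTop)
  rw [hc₂]
  exact (Nat.cast_le.2 (hφ.id_le m)).trans (hu (φ m)).le

end NormedAlgebra

/-- Furstenberg's lemma: if a subgroup `J ≤ GL(V)` (here `V = ℝⁿ`) preserves a Borel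
probability measure `μ` on the projective space `P(V)`, then either the image of `J` in
`PGL(V) = GL(V)/Z(GL(V))` has compact closure, or some proper nonzero subspace `W < V`
has positive measure. -/
theorem stmt_4 {n : ℕ}
    [MeasurableSpace (Projectivization ℝ (Fin n → ℝ))]
    [BorelSpace (Projectivization ℝ (Fin n → ℝ))]
    (J : Subgroup (GL (Fin n) ℝ))
    (μ : Measure (Projectivization ℝ (Fin n → ℝ))) [IsProbabilityMeasure μ]
    (hinv : ∀ g ∈ J,
      Measure.map
        (Projectivization.map
          ((Matrix.GeneralLinearGroup.toLin g).toLinearEquiv.toLinearMap)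
          (Matrix.GeneralLinearGroup.toLin g).toLinearEquiv.injective) μ = μ) :
    IsCompact (closure ((QuotientGroup.mk '' (J : Set (GL (Fin n) ℝ))) :
        Set (GL (Fin n) ℝ ⧸ Subgroup.center (GL (Fin n) ℝ)))) ∨
      ∃ W : Submodule ℝ (Fin n → ℝ), W ≠ ⊥ ∧ W ≠ ⊤ ∧
        0 < μ {x : Projectivization ℝ (Fin n → ℝ) | x.submodule ≤ W} := by
  -- any norm would do; the `ℓ∞` operator norm makes the matrices a normed `ℝ`-algebra
  let := Matrix.linftyOpNormedRing (n := Fin n) (α := ℝ)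
  let := Matrix.linftyOpNormedAlgebra (R := ℝ) (n := Fin n) (α := ℝ)
  by_cases hbdd : BddAbove ((fun g : GL (Fin n) ℝ => ‖(g : Matrix (Fin n) (Fin n) ℝ)‖ *
      ‖(↑g⁻¹ : Matrix (Fin n) (Fin n) ℝ)‖) '' J)
  · exact Or.inl (Units.isCompact_closure_image_mk_of_bddAbove hbdd)
  obtain ⟨A, hA0, hA, g, c, hgJ, hlim⟩ := Units.exists_tendsto_smul_not_isUnit hbdd
  refine Or.inr (Projectivization.exists_submodule_measure_pos_of_tendsto
    (f := fun m => (Matrix.GeneralLinearGroup.toLin (g m)).toLinearEquiv)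
    (c := fun m => (c m : ℝ)) (F := Matrix.toLin' A)
    (fun m => ⟨(Projectivization.continuous_map _
      (LinearMap.continuous_of_finiteDimensional _)).measurable, hinv _ (hgJ m)⟩)
    (fun m => (c m).ne_zero) (fun v => ?_) (Matrix.toLin'.map_ne_zero_iff.2 hA0) ?_)
  · refine (((continuous_id.matrix_mulVec continuous_const).tendsto A).comp hlim).congr
      fun m => ?_
    simp [Matrix.smul_mulVec, Units.smul_def]
  · exact fun hinj => hA (Matrix.mulVec_injective_iff_isUnit.1 hinj)
end

section
/- Let ρ : ℤ → GL(W) be a homomorphism with M = ρ(1) ∈ GL(W), W a finite-dimensional vector space over a local field, and let c : ℤ × S → GL(W) be a cocycle over a measure-preserving ℤ-action on (S, μ) taking values in a compact subgroup of GL(W) commuting with M. Set u(m, x) = ρ(m)c(m, x). Then for almost every x and every nonzero w ∈ W, the Lyapunov exponent lim_{m→∞} (1/m) log‖u(m,x)w‖ exists and equals log|λ| for some eigenvalue λ of M; precisely, the characteristic (Lyapunov) subspaces of the cocycle u are exactly the subspaces W_d(M) = ⊕_{log|λ| = d} W_λ(M), with characteristic exponents the numbers d = log|λ|, λ ranging over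 eigenvalues of M. -/
/-!
Since `c` takes values in a compact group commuting with `M`, the vector `u(m, x) w` equals
`c(m, x) (Mᵐ w)`, whose norm is within a bounded factor of `‖Mᵐ w‖`; so the exponents are those of
`m ↦ Mᵐ w`, for every `x`. For a generalized eigenvector `w` of `M` with eigenvalue `λ`, put
`N = M - λ` and let `r` be the last index with `Nʳ w ≠ 0`; the binomial expansion gives
`Mᵐ w = λᵐ C(m, r) (λ⁻ʳ Nʳ w + o(1))`, whose exponent is `log |λ|`. A general `w` is a sum of
generalized eigenvectors; the component with the largest `|λ|` dominates the sum from above, and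
from below because the projection onto its generalized eigenspace is bounded.
-/

open MeasureTheory Filter
open scoped Topology Matrix

-- Junk value: `Real.log 0 = 0`, so terms with `v m = 0` count as if `‖v m‖ = 1`.
def HasLyapunovExponent {E : Type*} [Norm E] (v : ℕ → E) (L : ℝ) : Prop :=
  Tendsto (fun m : ℕ => Real.log ‖v m‖ / m) atTop (𝓝 L)

section Lyapunov

variable {E F : Type*} [NormedAddCommGroup E] [NormedAddCommGroup F]

theorem tendsto_div_natCast_of_le_add_of_le_add {x l u : ℕ → ℝ} {L C₁ C₂ : ℝ}
    (hl : Tendsto (fun m : ℕ => l m / m) atTop (𝓝 L))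
    (hu : Tendsto (fun m : ℕ => u m / m) atTop (𝓝 L))
    (hlx : ∀ m, l m ≤ x m + C₁) (hxu : ∀ m, x m ≤ u m + C₂) :
    Tendsto (fun m : ℕ => x m / m) atTop (𝓝 L) := by
  have hC (C : ℝ) : Tendsto (fun m : ℕ => C / m) atTop (𝓝 0) :=
    tendsto_const_nhds.div_atTop tendsto_natCast_atTop_atTop
  refine tendsto_of_tendsto_of_tendsto_of_le_of_le (by simpa using hl.sub (hC C₁))
    (by simpa using hu.add (hC C₂)) (fun m => ?_) (fun m => ?_)
  · rw [← sub_div]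
    exact div_le_div_of_nonneg_right (by linarith [hlx m]) m.cast_nonneg
  · rw [← add_div]
    exact div_le_div_of_nonneg_right (hxu m) m.cast_nonneg

theorem Real.log_le_log_add_log_of_le_mul {a b K : ℝ} (ha : 0 < a) (h : a ≤ K * b) :
    Real.log a ≤ Real.log b + Real.log K := by
  have hKb : 0 < K * b := ha.trans_le h
  rw [add_comm, ← Real.log_mul (left_ne_zero_of_mul hKb.ne') (right_ne_zero_of_mul hKb.ne')]
  exact Real.log_le_log ha h

theorem HasLyapunovExponent.congr' {v u : ℕ → E} {L : ℝ} (h : HasLyapunovExponent v L)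
    (hvu : v =ᶠ[atTop] u) : HasLyapunovExponent u L :=
  Tendsto.congr' (hvu.mono fun m hm => by rw [hm]) h

theorem hasLyapunovExponent_of_tendsto {v : ℕ → E} {e : E} (hv : Tendsto v atTop (𝓝 e))
    (he : e ≠ 0) : HasLyapunovExponent v 0 :=
  ((Real.continuousAt_log (norm_ne_zero_iff.2 he)).tendsto.comp hv.norm).div_atTop
    tendsto_natCast_atTop_atTop

theorem hasLyapunovExponent_pow {𝕜 : Type*} [NormedDivisionRing 𝕜] (a : 𝕜) :
    HasLyapunovExponent (fun m => a ^ m) (Real.log ‖a‖) := by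
  refine tendsto_const_nhds.congr' ?_
  filter_upwards [eventually_ne_atTop 0] with m hm
  rw [norm_pow, Real.log_pow]
  field_simp

theorem HasLyapunovExponent.smul {𝕜 : Type*} [NormedField 𝕜] [NormedSpace 𝕜 E] {a : ℕ → 𝕜}
    {v : ℕ → E} {La Lv : ℝ} (ha : HasLyapunovExponent a La) (hv : HasLyapunovExponent v Lv)
    (ha₀ : ∀ᶠ m in atTop, a m ≠ 0) (hv₀ : ∀ᶠ m in atTop, v m ≠ 0) :
    HasLyapunovExponent (fun m => a m • v m) (La + Lv) := by
  refine (ha.add hv).congr' ?_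
  filter_upwards [ha₀, hv₀] with m hame hvm
  rw [norm_smul, Real.log_mul (norm_ne_zero_iff.2 hame) (norm_ne_zero_iff.2 hvm), add_div]

theorem HasLyapunovExponent.of_norm_le_mul {v : ℕ → E} {u : ℕ → F} {L K : ℝ}
    (hv : HasLyapunovExponent v L) (hv₀ : ∀ m, v m ≠ 0) (hvu : ∀ m, ‖v m‖ ≤ K * ‖u m‖)
    (huv : ∀ m, ‖u m‖ ≤ K * ‖v m‖) : HasLyapunovExponent u L := by
  have hv_pos (m : ℕ) : 0 < ‖v m‖ := norm_pos_iff.2 (hv₀ m)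
  have hu_pos (m : ℕ) : 0 < ‖u m‖ :=
    norm_pos_iff.2 fun h => by simpa [h] using (hv_pos m).trans_le (hvu m)
  exact tendsto_div_natCast_of_le_add_of_le_add hv hv
    (fun m => Real.log_le_log_add_log_of_le_mul (hv_pos m) (hvu m))
    (fun m => Real.log_le_log_add_log_of_le_mul (hu_pos m) (huv m))

theorem hasLyapunovExponent_sum {ι : Type*} {s : Finset ι} {v : ι → ℕ → E} {L : ι → ℝ}
    {i₀ : ι} {K : ℝ} (hi₀ : i₀ ∈ s) (hv : ∀ i ∈ s, HasLyapunovExponent (v i) (L i))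
    (hmax : ∀ i ∈ s, L i ≤ L i₀) (hv₀ : ∀ m, v i₀ m ≠ 0)
    (hK : ∀ m, ‖v i₀ m‖ ≤ K * ‖∑ i ∈ s, v i m‖) :
    HasLyapunovExponent (fun m => ∑ i ∈ s, v i m) (L i₀) := by
  have hs : s.Nonempty := ⟨i₀, hi₀⟩
  have hv_pos (m : ℕ) : 0 < ‖v i₀ m‖ := norm_pos_iff.2 (hv₀ m)
  have hsum_pos (m : ℕ) : 0 < ‖∑ i ∈ s, v i m‖ :=
    norm_pos_iff.2 fun h => by simpa [h] using (hv_pos m).trans_le (hK m)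
  have hsup : Tendsto (fun m : ℕ => s.sup' hs (fun i => Real.log ‖v i m‖) / m) atTop
      (𝓝 (L i₀)) := by
    have h := Tendsto.finset_sup'_nhds_apply hs hv
    rw [le_antisymm (Finset.sup'_le hs L hmax) (Finset.le_sup' L hi₀)] at h
    refine h.congr fun m => ?_
    exact (Finset.apply_sup'_eq_sup'_comp hs (· / (m : ℝ))
      fun a b => (max_div_div_right m.cast_nonneg a b).symm).symm
  refine tendsto_div_natCast_of_le_add_of_le_add (C₂ := Real.log s.card) (hv i₀ hi₀) hsup
    (fun m => Real.log_le_log_add_log_of_le_mul (hv_pos m) (hK m)) (fun m => ?_)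
  obtain ⟨j, hj, hjmax⟩ := s.exists_max_image (fun i => ‖v i m‖) hs
  have hle : ‖∑ i ∈ s, v i m‖ ≤ s.card * ‖v j m‖ :=
    (norm_sum_le _ _).trans (by simpa using Finset.sum_le_card_nsmul s _ _ hjmax)
  calc Real.log ‖∑ i ∈ s, v i m‖ ≤ Real.log ‖v j m‖ + Real.log s.card :=
        Real.log_le_log_add_log_of_le_mul (hsum_pos m) hle
    _ ≤ s.sup' hs (fun i => Real.log ‖v i m‖) + Real.log s.card := by
        gcongr
        exact Finset.le_sup' (fun i => Real.log ‖v i m‖) hj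

end Lyapunov

theorem tendsto_choose_div_choose_succ (j : ℕ) :
    Tendsto (fun m : ℕ => (m.choose j : ℝ) / m.choose (j + 1)) atTop (𝓝 0) := by
  have h : Tendsto (fun m : ℕ => ((j : ℝ) + 1) / ((m : ℝ) - j)) atTop (𝓝 0) :=
    tendsto_const_nhds.div_atTop
      (tendsto_atTop_add_const_right _ _ tendsto_natCast_atTop_atTop)
  refine h.congr' ?_
  filter_upwards [eventually_gt_atTop j] with m hm
  have hmj : (0 : ℝ) < m - j := sub_pos.2 (by exact_mod_cast hm)
  have hc : (0 : ℝ) < m.choose (j + 1) := by exact_mod_cast Nat.choose_pos hm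
  have key : (m.choose (j + 1) : ℝ) * (j + 1) = m.choose j * (m - j) := by
    rw [← Nat.cast_sub hm.le]
    exact_mod_cast Nat.choose_succ_right_eq m j
  rw [div_eq_div_iff hmj.ne' hc.ne']
  linarith

theorem tendsto_choose_div_choose {j r : ℕ} (h : j < r) :
    Tendsto (fun m : ℕ => (m.choose j : ℝ) / m.choose r) atTop (𝓝 0) := by
  induction r, h using Nat.le_induction with
  | base => exact tendsto_choose_div_choose_succ j
  | succ r _ ih =>
    refine (mul_zero (0 : ℝ) ▸ ih.mul (tendsto_choose_div_choose_succ r)).congr' ?_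
    filter_upwards [eventually_ge_atTop r] with m hm
    have : (m.choose r : ℝ) ≠ 0 := by exact_mod_cast (Nat.choose_pos hm).ne'
    field_simp

theorem hasLyapunovExponent_choose {𝕜 : Type*} [RCLike 𝕜] (r : ℕ) :
    HasLyapunovExponent (fun m : ℕ => (m.choose r : 𝕜)) 0 := by
  simp only [HasLyapunovExponent, RCLike.norm_natCast]
  have hlog : Tendsto (fun m : ℕ => Real.log m / m) atTop (𝓝 0) := by
    have h := Real.tendsto_pow_log_div_mul_add_atTop 1 0 1 one_ne_zero
    simp only [pow_one, one_mul, add_zero] at h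
    exact h.comp tendsto_natCast_atTop_atTop
  refine squeeze_zero' ?_ ?_ (by simpa using hlog.const_mul (r : ℝ))
  · filter_upwards [eventually_ge_atTop r] with m hm
    exact div_nonneg (Real.log_nonneg (by exact_mod_cast Nat.choose_pos hm)) m.cast_nonneg
  · filter_upwards [eventually_ge_atTop r] with m hm
    rw [mul_div_assoc', ← Real.log_pow]
    exact div_le_div_of_nonneg_right (Real.log_le_log (by exact_mod_cast Nat.choose_pos hm)
      (by exact_mod_cast Nat.choose_le_pow m r)) m.cast_nonneg

theorem iSupIndep.isCompl_biSup_ne {α ι : Type*} [CompleteLattice α] {t : ι → α}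
    (ht : iSupIndep t) (htop : ⨆ i, t i = ⊤) (i : ι) : IsCompl (t i) (⨆ (j) (_ : j ≠ i), t j) :=
  ⟨ht i, codisjoint_iff.2 (by rw [← iSup_split_single, htop])⟩

theorem iSupIndep.exists_norm_le_mul_norm_sum {ι 𝕜 E : Type*} [NontriviallyNormedField 𝕜]
    [CompleteSpace 𝕜] [NormedAddCommGroup E] [NormedSpace 𝕜 E] [FiniteDimensional 𝕜 E]
    {p : ι → Submodule 𝕜 E} (hp : iSupIndep p) (htop : ⨆ i, p i = ⊤) (i : ι) :
    ∃ K, ∀ (s : Finset ι) (x : ι → E), i ∈ s → (∀ j ∈ s, x j ∈ p j) →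
      ‖x i‖ ≤ K * ‖∑ j ∈ s, x j‖ := by
  let P : E →L[𝕜] E := LinearMap.toContinuousLinearMap
    ((p i).subtype ∘ₗ (p i).projectionOnto _ (hp.isCompl_biSup_ne htop i))
  refine ⟨‖P‖, fun s x hi hx => ?_⟩
  have hPx : P (∑ j ∈ s, x j) = x i := by
    rw [map_sum, Finset.sum_eq_single_of_mem i hi fun j hj hji => ?_]
    · exact congrArg Subtype.val (Submodule.projectionOnto_apply_left _ ⟨x i, hx i hi⟩)
    · exact congrArg Subtype.val (Submodule.projectionOnto_apply_right
        (hp.isCompl_biSup_ne htop i) ⟨x j, (le_biSup p hji) (hx j hj)⟩)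
  exact hPx ▸ P.le_opNorm _

namespace Module.End

theorem pow_apply_eq_sum_choose {R V : Type*} [CommRing R] [AddCommGroup V] [Module R V]
    (f : Module.End R V) (μ : R) {w : V} {r m : ℕ} (hr : ((f - μ • 1) ^ (r + 1)) w = 0)
    (hm : r ≤ m) :
    (f ^ m) w = ∑ i ∈ Finset.range (r + 1), (m.choose i * μ ^ (m - i)) • ((f - μ • 1) ^ i) w := by
  set N := f - μ • 1
  have hcomm : Commute N (μ • 1) := (Commute.one_right N).smul_right μ
  have hvanish (i : ℕ) (hi : r + 1 ≤ i) : (N ^ i) w = 0 := by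
    rw [← Nat.sub_add_cancel hi, pow_add, mul_apply, hr, map_zero]
  calc (f ^ m) w = ((N + μ • 1) ^ m) w := by rw [sub_add_cancel]
    _ = ∑ i ∈ Finset.range (m + 1), (m.choose i * μ ^ (m - i)) • (N ^ i) w := by
        rw [hcomm.add_pow, LinearMap.sum_apply]
        refine Finset.sum_congr rfl fun i _ => ?_
        rw [smul_pow, one_pow, mul_apply, mul_apply,
          natCast_apply, LinearMap.smul_apply, one_apply, map_smul,
          map_nsmul, ← Nat.cast_smul_eq_nsmul R, smul_smul, mul_comm]
    _ = _ := (Finset.sum_subset (Finset.range_subset_range.2 (by omega)) fun i _ hi => by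
          rw [hvanish i (by simpa using hi), smul_zero]).symm

theorem hasLyapunovExponent_of_mem_maxGenEigenspace {𝕜 V : Type*} [RCLike 𝕜]
    [NormedAddCommGroup V] [NormedSpace 𝕜 V] {f : Module.End 𝕜 V} {μ : 𝕜} (hμ : μ ≠ 0) {w : V}
    (hw : w ∈ f.maxGenEigenspace μ) (hw₀ : w ≠ 0) :
    HasLyapunovExponent (fun m => (f ^ m) w) (Real.log ‖μ‖) := by
  set N := f - μ • 1 with hN
  obtain ⟨r, hr, hr₁⟩ : ∃ r, (N ^ r) w ≠ 0 ∧ (N ^ (r + 1)) w = 0 := by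
    classical
    have hex := (f.mem_maxGenEigenspace μ w).1 hw
    have hpos : 0 < Nat.find hex := Nat.pos_of_ne_zero fun h => hw₀ (by
      simpa [h] using Nat.find_spec hex)
    exact ⟨Nat.find hex - 1, Nat.find_min hex (by omega),
      by rw [Nat.sub_add_cancel hpos]; exact Nat.find_spec hex⟩
  set e : ℕ → V := fun m => (μ ^ r)⁻¹ • (N ^ r) w +
    ∑ i ∈ Finset.range r, ((m.choose i / m.choose r : 𝕜) * (μ ^ i)⁻¹) • (N ^ i) w
  have he : Tendsto e atTop (𝓝 ((μ ^ r)⁻¹ • (N ^ r) w)) := by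
    have hsum := tendsto_finsetSum (Finset.range r) fun i hi =>
      ((((RCLike.continuous_ofReal (K := 𝕜)).tendsto 0).comp
        (tendsto_choose_div_choose (Finset.mem_range.1 hi))).mul_const
          (μ ^ i)⁻¹).smul_const ((N ^ i) w)
    simpa [Function.comp_def] using tendsto_const_nhds.add hsum
  have he₀ : (μ ^ r)⁻¹ • (N ^ r) w ≠ 0 := smul_ne_zero (inv_ne_zero (pow_ne_zero r hμ)) hr
  have hfe : ∀ m, r ≤ m → (f ^ m) w = μ ^ m • (m.choose r : 𝕜) • e m := by
    intro m hm
    have hc : (m.choose r : 𝕜) ≠ 0 := Nat.cast_ne_zero.2 (Nat.choose_pos hm).ne'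
    rw [f.pow_apply_eq_sum_choose μ hr₁ hm, Finset.sum_range_succ, add_comm, smul_add,
      smul_add, Finset.smul_sum, Finset.smul_sum, smul_smul, smul_smul, ← hN]
    congr 1
    · rw [pow_sub₀ μ hμ hm]; field_simp
    · refine Finset.sum_congr rfl fun i hi => ?_
      rw [smul_smul, smul_smul, pow_sub₀ μ hμ (by simp at hi; omega)]
      field_simp
  have hchoose₀ : ∀ᶠ m : ℕ in atTop, (m.choose r : 𝕜) ≠ 0 :=
    (eventually_ge_atTop r).mono fun m hm => Nat.cast_ne_zero.2 (Nat.choose_pos hm).ne'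
  have h := (hasLyapunovExponent_pow μ).smul
    ((hasLyapunovExponent_choose r).smul (hasLyapunovExponent_of_tendsto he he₀) hchoose₀
      (he.eventually_ne he₀))
    (.of_forall fun m => pow_ne_zero m hμ)
    (by filter_upwards [hchoose₀, he.eventually_ne he₀] with m h₁ h₂ using smul_ne_zero h₁ h₂)
  simpa using h.congr' ((eventually_ge_atTop r).mono fun m hm => (hfe m hm).symm)

theorem pow_apply_ne_zero {R V : Type*} [Semiring R] [AddCommMonoid V] [Module R V]
    {f : Module.End R V} (hf : IsUnit f) (m : ℕ) {w : V} (hw : w ≠ 0) : (f ^ m) w ≠ 0 :=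
  ((isUnit_iff _).1 (hf.pow m)).1.ne_iff' (map_zero _) |>.2 hw

theorem exists_hasLyapunovExponent {V : Type*} [NormedAddCommGroup V] [NormedSpace ℂ V]
    [FiniteDimensional ℂ V] {f : Module.End ℂ V} (hf : IsUnit f) {w : V} (hw : w ≠ 0) :
    ∃ μ, f.HasEigenvalue μ ∧ HasLyapunovExponent (fun m => (f ^ m) w) (Real.log ‖μ‖) := by
  have hw_mem : w ∈ ⨆ μ, f.maxGenEigenspace μ := f.iSup_maxGenEigenspace_eq_top ▸ trivial
  obtain ⟨d, hd, rfl⟩ := (Submodule.mem_iSup_iff_exists_finsupp _ w).1 hw_mem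
  have hs : d.support.Nonempty := Finsupp.support_nonempty_iff.2 (by rintro rfl; simp at hw)
  have heig : ∀ μ ∈ d.support, f.HasEigenvalue μ := fun μ hμ =>
    HasUnifEigenvalue.lt zero_lt_one
      ((Submodule.ne_bot_iff _).2 ⟨d μ, hd μ, Finsupp.mem_support_iff.1 hμ⟩)
  have hne : ∀ μ ∈ d.support, μ ≠ 0 := fun μ hμ h =>
    spectrum.zero_notMem ℂ hf (h ▸ (heig μ hμ).mem_spectrum)
  obtain ⟨μ₀, hμ₀, hmax⟩ := d.support.exists_max_image (fun μ => Real.log ‖μ‖) hs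
  obtain ⟨K, hK⟩ := f.independent_maxGenEigenspace.exists_norm_le_mul_norm_sum
    f.iSup_maxGenEigenspace_eq_top μ₀
  refine ⟨μ₀, heig μ₀ hμ₀, ?_⟩
  have h := hasLyapunovExponent_sum (v := fun μ m => (f ^ m) (d μ)) (K := K) hμ₀
    (fun μ hμ => hasLyapunovExponent_of_mem_maxGenEigenspace (hne μ hμ) (hd μ)
      (Finsupp.mem_support_iff.1 hμ))
    hmax (fun m => pow_apply_ne_zero hf m (Finsupp.mem_support_iff.1 hμ₀))
    (fun m => hK _ _ hμ₀ fun μ _ => mapsTo_maxGenEigenspace_of_comm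
      ((Commute.refl f).pow_right m) μ (hd μ))
  simpa [Finsupp.sum, map_sum] using h

end Module.End

section Matrix

variable {ι 𝕜 : Type*} [Fintype ι] [DecidableEq ι] [NormedField 𝕜]

theorem Matrix.mulVecLin_pow_apply {R : Type*} [CommSemiring R] (A : Matrix ι ι R) (m : ℕ)
    (v : ι → R) : (A.mulVecLin ^ m) v = A ^ m *ᵥ v := by
  rw [← Matrix.toLin'_apply', ← Matrix.toLin'_pow, Matrix.toLin'_apply]

theorem IsCompact.exists_norm_mulVec_le {C : Set (GL ι 𝕜)} (hC : IsCompact C) :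
    ∃ K, ∀ g ∈ C, ∀ v : ι → 𝕜, ‖(g : Matrix ι ι 𝕜) *ᵥ v‖ ≤ K * ‖v‖ := by
  let _ := Matrix.linftyOpNormedRing (n := ι) (α := 𝕜)
  obtain ⟨K, hK⟩ := hC.exists_bound_of_continuousOn
    (f := fun g : GL ι 𝕜 => (g : Matrix ι ι 𝕜)) Units.continuous_val.continuousOn
  exact ⟨K, fun g hg v => (Matrix.linfty_opNorm_mulVec _ v).trans (by gcongr; exact hK g hg)⟩

theorem HasLyapunovExponent.mulVec_of_isCompact {C : Subgroup (GL ι 𝕜)}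
    (hC : IsCompact (C : Set (GL ι 𝕜))) {g : ℕ → GL ι 𝕜} (hg : ∀ m, g m ∈ C)
    {v : ℕ → ι → 𝕜} {L : ℝ} (hv : HasLyapunovExponent v L) (hv₀ : ∀ m, v m ≠ 0) :
    HasLyapunovExponent (fun m => (g m : Matrix ι ι 𝕜) *ᵥ v m) L := by
  obtain ⟨K, hK⟩ := hC.exists_norm_mulVec_le
  refine hv.of_norm_le_mul hv₀ (fun m => ?_) (fun m => hK _ (hg m) _)
  calc ‖v m‖ = ‖(((g m)⁻¹ : GL ι 𝕜) : Matrix ι ι 𝕜) *ᵥ ((g m : Matrix ι ι 𝕜) *ᵥ v m)‖ := by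
        rw [Matrix.mulVec_mulVec, Units.inv_mul, Matrix.one_mulVec]
    _ ≤ K * _ := hK _ (C.inv_mem (hg m)) _

end Matrix

theorem stmt_17_general {n : ℕ} {S : Type*} [MeasurableSpace S] (μ : Measure S)
    (M : GL (Fin n) ℂ) (c : ℤ → S → GL (Fin n) ℂ)
    (C : Subgroup (GL (Fin n) ℂ))
    (hCcompact : IsCompact (C : Set (GL (Fin n) ℂ)))
    (hmem : ∀ m x, c m x ∈ C)
    (hcomm : ∀ g ∈ C, Commute g M) :
    ∀ᵐ x ∂μ,
      (∀ w : Fin n → ℂ, w ≠ 0 →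
        ∃ lam ∈ spectrum ℂ ((M : Matrix (Fin n) (Fin n) ℂ)),
          Tendsto
            (fun m : ℕ =>
              Real.log ‖((M ^ (m : ℤ) * c (m : ℤ) x : GL (Fin n) ℂ) :
                  Matrix (Fin n) (Fin n) ℂ).mulVec w‖ / m)
            atTop (nhds (Real.log ‖lam‖))) ∧
      (∀ lam ∈ spectrum ℂ ((M : Matrix (Fin n) (Fin n) ℂ)),
        ∀ w ∈ Module.End.maxGenEigenspace
            (Matrix.mulVecLin ((M : Matrix (Fin n) (Fin n) ℂ))) lam, w ≠ 0 →
          Tendsto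
            (fun m : ℕ =>
              Real.log ‖((M ^ (m : ℤ) * c (m : ℤ) x : GL (Fin n) ℂ) :
                  Matrix (Fin n) (Fin n) ℂ).mulVec w‖ / m)
            atTop (nhds (Real.log ‖lam‖))) := by
  set f := (M : Matrix (Fin n) (Fin n) ℂ).mulVecLin
  have hf : IsUnit f := M.isUnit.map (Matrix.toLinAlgEquiv' (R := ℂ) (n := Fin n))
  have hu (x : S) (m : ℕ) (w : Fin n → ℂ) : ((M ^ (m : ℤ) * c m x : GL (Fin n) ℂ) :
      Matrix (Fin n) (Fin n) ℂ) *ᵥ w = (c m x : Matrix (Fin n) (Fin n) ℂ) *ᵥ (f ^ m) w := by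
    rw [← ((hcomm _ (hmem m x)).zpow_right (m : ℤ)).eq, Units.val_mul, zpow_natCast,
      Units.val_pow_eq_pow_val, ← Matrix.mulVec_mulVec, Matrix.mulVecLin_pow_apply]
  have transfer (x : S) (w : Fin n → ℂ) (L : ℝ) (hw : w ≠ 0)
      (h : HasLyapunovExponent (fun m => (f ^ m) w) L) :
      HasLyapunovExponent (fun m : ℕ => ((M ^ (m : ℤ) * c m x : GL (Fin n) ℂ) :
        Matrix (Fin n) (Fin n) ℂ) *ᵥ w) L := by
    simpa only [hu] using h.mulVec_of_isCompact hCcompact (fun m => hmem m x)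
      (fun m => Module.End.pow_apply_ne_zero hf m hw)
  refine .of_forall fun x => ⟨fun w hw => ?_, fun ν hν w hw hw₀ => ?_⟩
  · obtain ⟨ν, hν, h⟩ := Module.End.exists_hasLyapunovExponent hf hw
    exact ⟨ν, by simpa [f, ← Matrix.toLin'_apply'] using hν.mem_spectrum, transfer x w _ hw h⟩
  · exact transfer x w _ hw₀ (Module.End.hasLyapunovExponent_of_mem_maxGenEigenspace
      (ne_of_mem_of_not_mem hν (Units.zero_notMem_spectrum ℂ M)) hw hw₀)

/-- Lyapunov spectrum of a cocycle of the form `u(m, x) = Mᵐ · c(m, x)` over a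
measure-preserving `ℤ`-action, where `c` takes values in a compact subgroup of `GL(W)`
commuting with `M`: almost surely, for every nonzero `w` the exponent
`lim (1/m) log ‖u(m,x) w‖` exists and equals `log |λ|` for some eigenvalue `λ` of `M`;
and on (nonzero vectors of) each generalized eigenspace of `M` for the eigenvalue `λ`
the exponent is exactly `log |λ|`. -/
theorem stmt_17 {n : ℕ} {S : Type*} [MeasurableSpace S] (μ : Measure S)
    [IsProbabilityMeasure μ]
    (A : Equiv.Perm S) (hA : MeasurePreserving A μ μ)
    (M : GL (Fin n) ℂ) (c : ℤ → S → GL (Fin n) ℂ)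
    (C : Subgroup (GL (Fin n) ℂ))
    (hCcompact : IsCompact (C : Set (GL (Fin n) ℂ)))
    (hmem : ∀ m x, c m x ∈ C)
    (hcomm : ∀ g ∈ C, Commute g M)
    (hcoc : ∀ (m k : ℤ) (x : S), c (m + k) x = c m ((A ^ k) x) * c k x) :
    ∀ᵐ x ∂μ,
      (∀ w : Fin n → ℂ, w ≠ 0 →
        ∃ lam ∈ spectrum ℂ ((M : Matrix (Fin n) (Fin n) ℂ)),
          Tendsto
            (fun m : ℕ =>
              Real.log ‖((M ^ (m : ℤ) * c (m : ℤ) x : GL (Fin n) ℂ) :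
                  Matrix (Fin n) (Fin n) ℂ).mulVec w‖ / m)
            atTop (nhds (Real.log ‖lam‖))) ∧
      (∀ lam ∈ spectrum ℂ ((M : Matrix (Fin n) (Fin n) ℂ)),
        ∀ w ∈ Module.End.maxGenEigenspace
            (Matrix.mulVecLin ((M : Matrix (Fin n) (Fin n) ℂ))) lam, w ≠ 0 →
          Tendsto
            (fun m : ℕ =>
              Real.log ‖((M ^ (m : ℤ) * c (m : ℤ) x : GL (Fin n) ℂ) :
                  Matrix (Fin n) (Fin n) ℂ).mulVec w‖ / m)
            atTop (nhds (Real.log ‖lam‖))) :=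
  stmt_17_general μ M c C hCcompact hmem hcomm
end
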